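/- Let k, n, G and H be as in the context. For every dominating set S of H with M(v,S) ≤ n+1 for every vertex v of H, and for every block B of H (vertex-block or edge-block), there is exactly one type-I gadget in B whose set A = {a_1, …, a_n} is contained in S. -/
import Mathlib


namespace MCCRed

/-- Vertex set of a type-I gadget of order `n`: the heads `h₁, h₂`, the sets
`A = {a_1,…,a_n}` and `D = {d_1,…,d_n}`, and, for each `t ∈ [n]` and each of
the three D-gadgets `D_{a_t,d_t}`, `D_{a_t,h₁}`, `D_{d_t,h₂}` (indexed by
`Fin 3` in this order), its `n+2` private common neighbors. -/
abbrev IVert (n : ℕ) : Type :=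
  (Unit ⊕ Unit) ⊕ ((Fin n ⊕ Fin n) ⊕ (Fin n × Fin 3 × Fin (n + 2)))

/-- The head `h₁`. -/
def h1V (n : ℕ) : IVert n := Sum.inl (Sum.inl ())
/-- The head `h₂`. -/
def h2V (n : ℕ) : IVert n := Sum.inl (Sum.inr ())
/-- The vertex `a_t`. -/
def aIV (n : ℕ) (t : Fin n) : IVert n := Sum.inr (Sum.inl (Sum.inl t))
/-- The vertex `d_t`. -/
def dIV (n : ℕ) (t : Fin n) : IVert n := Sum.inr (Sum.inl (Sum.inr t))
/-- The `s`-th private vertex of the `w`-th D-gadget at position `t`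
(`w = 0`: `D_{a_t,d_t}`, `w = 1`: `D_{a_t,h₁}`, `w = 2`: `D_{d_t,h₂}`). -/
def padV (n : ℕ) (t : Fin n) (w : Fin 3) (s : Fin (n + 2)) : IVert n :=
  Sum.inr (Sum.inr (t, w, s))

/-- Adjacency-generating relation of the type-I gadget:  `h₁h₂`, `h₂` to every
`a_t`, `h₁` to every `d_t`, the heads of each D-gadget are adjacent
(`a_t d_t`, `a_t h₁`, `d_t h₂`), and each of the `n+2` private vertices of a
D-gadget is adjacent exactly to its two heads. -/
def rI (n : ℕ) : IVert n → IVert n → Prop := fun x y =>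
  (x = h1V n ∧ y = h2V n) ∨
  (∃ t, x = h2V n ∧ y = aIV n t) ∨
  (∃ t, x = h1V n ∧ y = dIV n t) ∨
  (∃ t, x = aIV n t ∧ y = dIV n t) ∨
  (∃ t, x = aIV n t ∧ y = h1V n) ∨
  (∃ t, x = dIV n t ∧ y = h2V n) ∨
  (∃ t s, x = padV n t 0 s ∧ (y = aIV n t ∨ y = dIV n t)) ∨
  (∃ t s, x = padV n t 1 s ∧ (y = aIV n t ∨ y = h1V n)) ∨
  (∃ t s, x = padV n t 2 s ∧ (y = dIV n t ∨ y = h2V n))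

/-- The type-I gadget of order `n` as a simple graph. -/
def gadgetI (n : ℕ) : SimpleGraph (IVert n) := SimpleGraph.fromRel (rI n)

/-- Vertex set of a block whose type-I gadgets are indexed by `ι`: the gadget
vertices together with `f`, `f'`, the `c_p` (`p ∈ [n+1]`) and the `b_q`
(`q ∈ [(n+1)(n+2)]`). -/
abbrev BVert (n : ℕ) (ι : Type) : Type :=
  (ι × IVert n) ⊕ ((Unit ⊕ Unit) ⊕ (Fin (n + 1) ⊕ Fin ((n + 1) * (n + 2))))

/-- The copy of gadget vertex `x` inside the gadget indexed by `g`. -/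
def gadV {n : ℕ} {ι : Type} (g : ι) (x : IVert n) : BVert n ι := Sum.inl (g, x)
/-- The block vertex `f`. -/
def fV (n : ℕ) (ι : Type) : BVert n ι := Sum.inr (Sum.inl (Sum.inl ()))
/-- The block vertex `f'`. -/
def f'V (n : ℕ) (ι : Type) : BVert n ι := Sum.inr (Sum.inl (Sum.inr ()))
/-- The block vertex `c_p`; `C'(B) = {c_1,…,c_{n+1}}`. -/
def cV (n : ℕ) (ι : Type) (p : Fin (n + 1)) : BVert n ι := Sum.inr (Sum.inr (Sum.inl p))
/-- The block vertex `b_q`. -/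
def bV (n : ℕ) (ι : Type) (q : Fin ((n + 1) * (n + 2))) : BVert n ι :=
  Sum.inr (Sum.inr (Sum.inr q))

/-- Adjacency-generating relation of a block: the gadget edges inside each
gadget, `f` adjacent to every `a_t` of every gadget, `f f'`, `f'` to each
`c_p`, and `c_p b_q` exactly when `(p-1)(n+2) < q ≤ p(n+2)` (zero-indexed:
`p(n+2) ≤ q < (p+1)(n+2)`). -/
def rB (n : ℕ) (ι : Type) : BVert n ι → BVert n ι → Prop := fun x y =>
  (∃ (g : ι) (a b : IVert n), x = gadV g a ∧ y = gadV g b ∧ rI n a b) ∨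
  (∃ (g : ι) (t : Fin n), x = fV n ι ∧ y = gadV g (aIV n t)) ∨
  (x = fV n ι ∧ y = f'V n ι) ∨
  (∃ p, x = f'V n ι ∧ y = cV n ι p) ∨
  (∃ p q, x = cV n ι p ∧ y = bV n ι q ∧
    p.val * (n + 2) ≤ q.val ∧ q.val < (p.val + 1) * (n + 2))

/-- Ordered pairs of colors `i < j`, indexing the edge-blocks and connectors. -/
abbrev Pairs (k : ℕ) : Type := {p : Fin k × Fin k // p.1 < p.2}

/-- The edges of `G` between color classes `P.1` and `P.2` (the vertex set of
`G` being `Fin k × Fin n`, with `u_{i,ℓ} = (i,ℓ)`): `e = (x,y)` encodes the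
edge `u_{i,x} u_{j,y}`. -/
abbrev EdgeIn {k n : ℕ} (G : SimpleGraph (Fin k × Fin n)) (P : Pairs k) : Type :=
  {e : Fin n × Fin n // G.Adj (P.1.1, e.1) (P.1.2, e.2)}

/-- Vertex set of `H`: the vertex-blocks `H_i` (with one gadget per `ℓ ∈ [n]`),
the edge-blocks `H_{i,j}` (with one gadget per edge in `E_{i,j}`), and for each
pair `i < j` the four connectors, encoded as `(side, kind)` with
`side = false/true` for superscript `i`/`j` and `kind = false/true` for
`r`/`s`. -/
abbrev VHmcc (k n : ℕ) (G : SimpleGraph (Fin k × Fin n)) : Type :=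
  (Fin k × BVert n (Fin n)) ⊕
    ((Σ P : Pairs k, BVert n (EdgeIn G P)) ⊕ (Pairs k × Bool × Bool))

variable {k n : ℕ}

/-- Vertex `x` of the vertex-block `H_i`. -/
def vbV (G : SimpleGraph (Fin k × Fin n)) (i : Fin k) (x : BVert n (Fin n)) :
    VHmcc k n G := Sum.inl (i, x)

/-- Vertex `x` of the edge-block `H_P`. -/
def ebV (G : SimpleGraph (Fin k × Fin n)) (P : Pairs k)
    (x : BVert n (EdgeIn G P)) : VHmcc k n G := Sum.inr (Sum.inl ⟨P, x⟩)

/-- The connector vertex of the pair `P` on side `side` of kind `kind`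
(`kind = false` is `r`, `kind = true` is `s`). -/
def connV (G : SimpleGraph (Fin k × Fin n)) (P : Pairs k) (side kind : Bool) :
    VHmcc k n G := Sum.inr (Sum.inr (P, side, kind))

/-- Adjacency-generating relation of `H`: block edges inside every vertex-block
and every edge-block, plus the connector edges. For a pair `P = (i,j)` with
`i < j`: in gadget `I_ℓ` of `H_i` the vertex `a_t` is adjacent to `s^i_P` iff
`t ≤ ℓ` and to `r^i_P` iff `ℓ ≤ t` (similarly for `H_j`); in gadget `I_e` of
`H_P` with `e = u_{i,x}u_{j,y}`, the vertex `a_t` is adjacent to `r^i_P` iff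
`t ≤ x`, to `s^i_P` iff `x ≤ t`, to `r^j_P` iff `t ≤ y` and to `s^j_P` iff
`y ≤ t`. -/
def rH (k n : ℕ) (G : SimpleGraph (Fin k × Fin n)) :
    VHmcc k n G → VHmcc k n G → Prop := fun x y =>
  (∃ (i : Fin k) (a b : BVert n (Fin n)),
    x = vbV G i a ∧ y = vbV G i b ∧ rB n (Fin n) a b) ∨
  (∃ (P : Pairs k) (a b : BVert n (EdgeIn G P)),
    x = ebV G P a ∧ y = ebV G P b ∧ rB n (EdgeIn G P) a b) ∨
  (∃ (P : Pairs k) (ℓ t : Fin n), x = vbV G P.1.1 (gadV ℓ (aIV n t)) ∧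
    ((t.val ≤ ℓ.val ∧ y = connV G P false true) ∨
     (ℓ.val ≤ t.val ∧ y = connV G P false false))) ∨
  (∃ (P : Pairs k) (ℓ t : Fin n), x = vbV G P.1.2 (gadV ℓ (aIV n t)) ∧
    ((t.val ≤ ℓ.val ∧ y = connV G P true true) ∨
     (ℓ.val ≤ t.val ∧ y = connV G P true false))) ∨
  (∃ (P : Pairs k) (e : EdgeIn G P) (t : Fin n),
    x = ebV G P (gadV e (aIV n t)) ∧
    (((t.val ≤ e.1.1.val ∧ y = connV G P false false) ∨
      (e.1.1.val ≤ t.val ∧ y = connV G P false true)) ∨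
     ((t.val ≤ e.1.2.val ∧ y = connV G P true false) ∨
      (e.1.2.val ≤ t.val ∧ y = connV G P true true))))

/-- The graph `H` output by the reduction from Multi-Colored Clique. -/
def Hmcc (k n : ℕ) (G : SimpleGraph (Fin k × Fin n)) :
    SimpleGraph (VHmcc k n G) := SimpleGraph.fromRel (rH k n G)

/-- `S` is a dominating set. -/
def IsDom {W : Type*} (H : SimpleGraph W) (S : Set W) : Prop :=
  ∀ v, v ∈ S ∨ ∃ u ∈ S, H.Adj v u

/-- Every vertex has membership `M(v,S) = |N[v] ∩ S|` at most `b`. -/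
def MembLE {W : Type*} (H : SimpleGraph W) (S : Set W) (b : ℕ) : Prop :=
  ∀ v, ((insert v (H.neighborSet v)) ∩ S).ncard ≤ b

/-- A path decomposition of `H` with bags `X_1, …, X_m`: every vertex is in
some bag, every edge is inside some bag, and the bags containing a given
vertex are consecutive. -/
def IsPathDecomp {W : Type*} (H : SimpleGraph W) (m : ℕ) (bags : Fin m → Set W) : Prop :=
  (∀ v, ∃ i, v ∈ bags i) ∧
  (∀ u v, H.Adj u v → ∃ i, u ∈ bags i ∧ v ∈ bags i) ∧
  (∀ (v : W) (i j l : Fin m), i ≤ j → j ≤ l → v ∈ bags i → v ∈ bags l → v ∈ bags j)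

end MCCRed

open MCCRed

namespace MCCRed
section
variable {k n : ℕ} {G : SimpleGraph (Fin k × Fin n)}

instance : Finite (VHmcc k n G) := by
  unfold VHmcc; infer_instance

lemma adj_vb_iff (i : Fin k) (x y : BVert n (Fin n)) :
    (Hmcc k n G).Adj (vbV G i x) (vbV G i y) ↔
      x ≠ y ∧ (rB n (Fin n) x y ∨ rB n (Fin n) y x) := by
  rw [Hmcc, SimpleGraph.fromRel_adj]
  constructor
  · rintro ⟨hne, h⟩
    refine ⟨fun h' => hne (by rw [h']), ?_⟩
    rcases h with h | h <;>
    · rcases h with ⟨i', a, b, ha, hb, hr⟩ | ⟨P, a, b, ha, hb, hr⟩ |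
        ⟨P, l, t, ha, hb⟩ | ⟨P, l, t, ha, hb⟩ | ⟨P, e, t, ha, hb⟩ <;>
      simp_all [vbV, ebV, connV]
  · rintro ⟨hne, h⟩
    refine ⟨by simpa [vbV] using hne, ?_⟩
    rcases h with h | h
    · exact Or.inl (Or.inl ⟨i, x, y, rfl, rfl, h⟩)
    · exact Or.inr (Or.inl ⟨i, y, x, rfl, rfl, h⟩)

lemma adj_eb_iff (P : Pairs k) (x y : BVert n (EdgeIn G P)) :
    (Hmcc k n G).Adj (ebV G P x) (ebV G P y) ↔
      x ≠ y ∧ (rB n (EdgeIn G P) x y ∨ rB n (EdgeIn G P) y x) := by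
  rw [Hmcc, SimpleGraph.fromRel_adj]
  constructor
  · rintro ⟨hne, h⟩
    refine ⟨fun h' => hne (by rw [h']), ?_⟩
    rcases h with h | h
    · rcases h with ⟨i', a, b, ha, hb, hr⟩ | ⟨P', a, b, ha, hb, hr⟩ |
        ⟨P', l, t, ha, hb⟩ | ⟨P', l, t, ha, hb⟩ | ⟨P', e, t, ha, hb⟩
      · exact absurd ha (by simp [vbV, ebV])
      · left
        injection ha with ha; injection ha with ha
        injection hb with hb; injection hb with hb
        obtain ⟨rfl, ha⟩ := Sigma.mk.inj_iff.mp ha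
        obtain ⟨-, hb⟩ := Sigma.mk.inj_iff.mp hb
        rw [eq_of_heq ha, eq_of_heq hb]; exact hr
      · exact absurd ha (by simp [vbV, ebV])
      · exact absurd ha (by simp [vbV, ebV])
      · rcases hb with (⟨_, hb⟩ | ⟨_, hb⟩) | (⟨_, hb⟩ | ⟨_, hb⟩) <;>
          exact absurd hb (by simp [ebV, connV])
    · rcases h with ⟨i', a, b, ha, hb, hr⟩ | ⟨P', a, b, ha, hb, hr⟩ |
        ⟨P', l, t, ha, hb⟩ | ⟨P', l, t, ha, hb⟩ | ⟨P', e, t, ha, hb⟩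
      · exact absurd ha (by simp [vbV, ebV])
      · right
        injection ha with ha; injection ha with ha
        injection hb with hb; injection hb with hb
        obtain ⟨rfl, ha⟩ := Sigma.mk.inj_iff.mp ha
        obtain ⟨-, hb⟩ := Sigma.mk.inj_iff.mp hb
        rw [eq_of_heq ha, eq_of_heq hb]; exact hr
      · exact absurd ha (by simp [vbV, ebV])
      · exact absurd ha (by simp [vbV, ebV])
      · rcases hb with (⟨_, hb⟩ | ⟨_, hb⟩) | (⟨_, hb⟩ | ⟨_, hb⟩) <;>
          exact absurd hb (by simp [ebV, connV])
  · rintro ⟨hne, h⟩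
    refine ⟨by simpa [ebV] using hne, ?_⟩
    rcases h with h | h
    · exact Or.inl (Or.inr (Or.inl ⟨P, x, y, rfl, rfl, h⟩))
    · exact Or.inr (Or.inr (Or.inl ⟨P, y, x, rfl, rfl, h⟩))

lemma back_vb (i : Fin k) (x : BVert n (Fin n))
    (hx : ∀ (g : Fin n) (t : Fin n), x ≠ gadV g (aIV n t))
    (u : VHmcc k n G) (hu : (Hmcc k n G).Adj (vbV G i x) u) :
    ∃ y, u = vbV G i y := by
  rw [Hmcc, SimpleGraph.fromRel_adj] at hu
  obtain ⟨hne, h⟩ := hu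
  rcases h with h | h
  · rcases h with ⟨i', a, b, ha, hb, hr⟩ | ⟨P', a, b, ha, hb, hr⟩ |
      ⟨P', l, t, ha, hb⟩ | ⟨P', l, t, ha, hb⟩ | ⟨P', e, t, ha, hb⟩
    · simp only [vbV, Sum.inl.injEq, Prod.mk.injEq] at ha
      obtain ⟨rfl, rfl⟩ := ha
      exact ⟨b, hb⟩
    · exact absurd ha (by simp [vbV, ebV])
    · simp only [vbV, Sum.inl.injEq, Prod.mk.injEq] at ha
      exact absurd ha.2 (hx l t)
    · simp only [vbV, Sum.inl.injEq, Prod.mk.injEq] at ha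
      exact absurd ha.2 (hx l t)
    · exact absurd ha (by simp [vbV, ebV])
  · rcases h with ⟨i', a, b, ha, hb, hr⟩ | ⟨P', a, b, ha, hb, hr⟩ |
      ⟨P', l, t, ha, hb⟩ | ⟨P', l, t, ha, hb⟩ | ⟨P', e, t, ha, hb⟩
    · simp only [vbV, Sum.inl.injEq, Prod.mk.injEq] at hb
      obtain ⟨rfl, rfl⟩ := hb
      exact ⟨a, ha⟩
    · exact absurd hb (by simp [vbV, ebV])
    · rcases hb with ⟨_, hb⟩ | ⟨_, hb⟩ <;> exact absurd hb (by simp [vbV, connV])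
    · rcases hb with ⟨_, hb⟩ | ⟨_, hb⟩ <;> exact absurd hb (by simp [vbV, connV])
    · rcases hb with (⟨_, hb⟩ | ⟨_, hb⟩) | (⟨_, hb⟩ | ⟨_, hb⟩) <;>
        exact absurd hb (by simp [vbV, connV])

lemma back_eb (P : Pairs k) (x : BVert n (EdgeIn G P))
    (hx : ∀ (g : EdgeIn G P) (t : Fin n), x ≠ gadV g (aIV n t))
    (u : VHmcc k n G) (hu : (Hmcc k n G).Adj (ebV G P x) u) :
    ∃ y, u = ebV G P y := by
  rw [Hmcc, SimpleGraph.fromRel_adj] at hu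
  obtain ⟨hne, h⟩ := hu
  rcases h with h | h
  · rcases h with ⟨i', a, b, ha, hb, hr⟩ | ⟨P', a, b, ha, hb, hr⟩ |
      ⟨P', l, t, ha, hb⟩ | ⟨P', l, t, ha, hb⟩ | ⟨P', e, t, ha, hb⟩
    · exact absurd ha (by simp [vbV, ebV])
    · injection ha with ha; injection ha with ha
      obtain ⟨rfl, -⟩ := Sigma.mk.inj_iff.mp ha
      exact ⟨b, hb⟩
    · exact absurd ha (by simp [vbV, ebV])
    · exact absurd ha (by simp [vbV, ebV])
    · injection ha with ha; injection ha with ha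
      obtain ⟨rfl, ha⟩ := Sigma.mk.inj_iff.mp ha
      exact absurd (eq_of_heq ha) (hx e t)
  · rcases h with ⟨i', a, b, ha, hb, hr⟩ | ⟨P', a, b, ha, hb, hr⟩ |
      ⟨P', l, t, ha, hb⟩ | ⟨P', l, t, ha, hb⟩ | ⟨P', e, t, ha, hb⟩
    · exact absurd hb (by simp [vbV, ebV])
    · injection hb with hb; injection hb with hb
      obtain ⟨rfl, -⟩ := Sigma.mk.inj_iff.mp hb
      exact ⟨a, ha⟩
    · rcases hb with ⟨_, hb⟩ | ⟨_, hb⟩ <;> exact absurd hb (by simp [ebV, connV])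
    · rcases hb with ⟨_, hb⟩ | ⟨_, hb⟩ <;> exact absurd hb (by simp [ebV, connV])
    · rcases hb with (⟨_, hb⟩ | ⟨_, hb⟩) | (⟨_, hb⟩ | ⟨_, hb⟩) <;>
        exact absurd hb (by simp [ebV, connV])

/-! ### Small intro facts for `rI` and `rB` -/

lemma rI_h1_h2 : rI n (h1V n) (h2V n) := Or.inl ⟨rfl, rfl⟩
lemma rI_h2_a (t : Fin n) : rI n (h2V n) (aIV n t) := Or.inr (Or.inl ⟨t, rfl, rfl⟩)
lemma rI_h1_d (t : Fin n) : rI n (h1V n) (dIV n t) := Or.inr (Or.inr (Or.inl ⟨t, rfl, rfl⟩))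
lemma rI_a_d (t : Fin n) : rI n (aIV n t) (dIV n t) :=
  Or.inr (Or.inr (Or.inr (Or.inl ⟨t, rfl, rfl⟩)))
lemma rI_a_h1 (t : Fin n) : rI n (aIV n t) (h1V n) :=
  Or.inr (Or.inr (Or.inr (Or.inr (Or.inl ⟨t, rfl, rfl⟩))))
lemma rI_d_h2 (t : Fin n) : rI n (dIV n t) (h2V n) :=
  Or.inr (Or.inr (Or.inr (Or.inr (Or.inr (Or.inl ⟨t, rfl, rfl⟩)))))
lemma rI_pad0 (t : Fin n) (s : Fin (n + 2)) (y : IVert n)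
    (hy : y = aIV n t ∨ y = dIV n t) : rI n (padV n t 0 s) y :=
  Or.inr (Or.inr (Or.inr (Or.inr (Or.inr (Or.inr (Or.inl ⟨t, s, rfl, hy⟩))))))
lemma rI_pad1 (t : Fin n) (s : Fin (n + 2)) (y : IVert n)
    (hy : y = aIV n t ∨ y = h1V n) : rI n (padV n t 1 s) y :=
  Or.inr (Or.inr (Or.inr (Or.inr (Or.inr (Or.inr (Or.inr (Or.inl ⟨t, s, rfl, hy⟩)))))))
lemma rI_pad2 (t : Fin n) (s : Fin (n + 2)) (y : IVert n)
    (hy : y = dIV n t ∨ y = h2V n) : rI n (padV n t 2 s) y :=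
  Or.inr (Or.inr (Or.inr (Or.inr (Or.inr (Or.inr (Or.inr (Or.inr ⟨t, s, rfl, hy⟩)))))))

variable {ι : Type}

lemma rB_gad {g : ι} {x y : IVert n} (h : rI n x y) : rB n ι (gadV g x) (gadV g y) :=
  Or.inl ⟨g, x, y, rfl, rfl, h⟩
lemma rB_f_a (g : ι) (t : Fin n) : rB n ι (fV n ι) (gadV g (aIV n t)) :=
  Or.inr (Or.inl ⟨g, t, rfl, rfl⟩)
lemma rB_f_f' : rB n ι (fV n ι) (f'V n ι) := Or.inr (Or.inr (Or.inl ⟨rfl, rfl⟩))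
lemma rB_f'_c (p : Fin (n + 1)) : rB n ι (f'V n ι) (cV n ι p) :=
  Or.inr (Or.inr (Or.inr (Or.inl ⟨p, rfl, rfl⟩)))
lemma rB_c_b (p : Fin (n + 1)) (q : Fin ((n + 1) * (n + 2)))
    (h1 : p.val * (n + 2) ≤ q.val) (h2 : q.val < (p.val + 1) * (n + 2)) :
    rB n ι (cV n ι p) (bV n ι q) :=
  Or.inr (Or.inr (Or.inr (Or.inr ⟨p, q, rfl, rfl, h1, h2⟩)))

/-! ### Neighbor characterizations inside a block -/

lemma rB_b_nbr {q : Fin ((n + 1) * (n + 2))} {y : BVert n ι}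
    (h : rB n ι (bV n ι q) y ∨ rB n ι y (bV n ι q)) :
    ∃ p : Fin (n + 1), y = cV n ι p ∧
      p.val * (n + 2) ≤ q.val ∧ q.val < (p.val + 1) * (n + 2) := by
  rcases h with h | h <;>
    rcases h with ⟨g, a, b, h1, h2, hr⟩ | ⟨g, t, h1, h2⟩ | ⟨h1, h2⟩ |
      ⟨p, h1, h2⟩ | ⟨p, q', h1, h2, hq1, hq2⟩ <;>
    simp_all [gadV, fV, f'V, cV, bV]

lemma rI_pad_nbr {t : Fin n} {w : Fin 3} {s : Fin (n + 2)} {y : IVert n}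
    (h : rI n (padV n t w s) y ∨ rI n y (padV n t w s)) :
    (w = 0 ∧ (y = aIV n t ∨ y = dIV n t)) ∨
    (w = 1 ∧ (y = aIV n t ∨ y = h1V n)) ∨
    (w = 2 ∧ (y = dIV n t ∨ y = h2V n)) := by
  rcases h with h | h <;>
    rcases h with ⟨h1, h2⟩ | ⟨t', h1, h2⟩ | ⟨t', h1, h2⟩ | ⟨t', h1, h2⟩ |
      ⟨t', h1, h2⟩ | ⟨t', h1, h2⟩ | ⟨t', s', h1, h2⟩ | ⟨t', s', h1, h2⟩ | ⟨t', s', h1, h2⟩ <;>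
    simp_all [h1V, h2V, aIV, dIV, padV]

lemma rB_pad_nbr {g : ι} {t : Fin n} {w : Fin 3} {s : Fin (n + 2)} {y : BVert n ι}
    (h : rB n ι (gadV g (padV n t w s)) y ∨ rB n ι y (gadV g (padV n t w s))) :
    ∃ z, y = gadV g z ∧
      ((w = 0 ∧ (z = aIV n t ∨ z = dIV n t)) ∨
       (w = 1 ∧ (z = aIV n t ∨ z = h1V n)) ∨
       (w = 2 ∧ (z = dIV n t ∨ z = h2V n))) := by
  rcases h with h | h
  · rcases h with ⟨g', a, b, h1, h2, hr⟩ | ⟨g', t', h1, h2⟩ | ⟨h1, h2⟩ |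
      ⟨p, h1, h2⟩ | ⟨p, q', h1, h2, hq1, hq2⟩
    · simp only [gadV, Sum.inl.injEq, Prod.mk.injEq] at h1
      obtain ⟨rfl, rfl⟩ := h1
      exact ⟨b, h2, rI_pad_nbr (Or.inl hr)⟩
    · exact absurd h1 (by simp [gadV, fV])
    · exact absurd h1 (by simp [gadV, fV])
    · exact absurd h1 (by simp [gadV, f'V])
    · exact absurd h1 (by simp [gadV, cV])
  · rcases h with ⟨g', a, b, h1, h2, hr⟩ | ⟨g', t', h1, h2⟩ | ⟨h1, h2⟩ |
      ⟨p, h1, h2⟩ | ⟨p, q', h1, h2, hq1, hq2⟩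
    · simp only [gadV, Sum.inl.injEq, Prod.mk.injEq] at h2
      obtain ⟨rfl, rfl⟩ := h2
      exact ⟨a, h1, rI_pad_nbr (Or.inr hr)⟩
    · exact absurd h2 (by simp [gadV, aIV, padV])
    · exact absurd h2 (by simp [gadV, f'V])
    · exact absurd h2 (by simp [gadV, cV])
    · exact absurd h2 (by simp [gadV, bV])

lemma rB_f_nbr {y : BVert n ι}
    (h : rB n ι (fV n ι) y ∨ rB n ι y (fV n ι)) :
    y = f'V n ι ∨ ∃ (g : ι) (t : Fin n), y = gadV g (aIV n t) := by
  rcases h with h | h <;>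
    rcases h with ⟨g, a, b, h1, h2, hr⟩ | ⟨g, t, h1, h2⟩ | ⟨h1, h2⟩ |
      ⟨p, h1, h2⟩ | ⟨p, q', h1, h2, hq1, hq2⟩ <;>
    simp_all [gadV, fV, f'V, cV, bV]

/-! ### cardinality helpers -/

lemma ncard_img {α : Type*} {m : ℕ} (f : Fin m → α) (hf : Function.Injective f) :
    (f '' Set.univ).ncard = m := by
  rw [Set.ncard_image_of_injective _ hf, Set.ncard_univ, Nat.card_eq_fintype_card,
    Fintype.card_fin]

lemma ncard_ins1 {α : Type*} {m : ℕ} (x : α) (f : Fin m → α) (hf : Function.Injective f)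
    (hx : ∀ s, x ≠ f s) :
    (insert x (f '' Set.univ)).ncard = m + 1 := by
  rw [Set.ncard_insert_of_notMem (by rintro ⟨s, -, hs⟩; exact hx s hs.symm)
      (Set.finite_univ.image f), ncard_img f hf]

lemma ncard_ins2 {α : Type*} {m : ℕ} (x y : α) (f : Fin m → α) (hf : Function.Injective f)
    (hxy : x ≠ y) (hx : ∀ s, x ≠ f s) (hy : ∀ s, y ≠ f s) :
    (insert x (insert y (f '' Set.univ))).ncard = m + 2 := by
  rw [Set.ncard_insert_of_notMem
      (by
        rintro (h | ⟨s, -, hs⟩)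
        · exact hxy h
        · exact hx s hs.symm)
      ((Set.finite_univ.image f).insert y), ncard_ins1 y f hf hy]

lemma ncard_union2 {α : Type*} {m : ℕ} (f h : Fin m → α) (hf : Function.Injective f)
    (hh : Function.Injective h) (hfh : ∀ s s', f s ≠ h s') :
    (f '' Set.univ ∪ h '' Set.univ).ncard = m + m := by
  rw [Set.ncard_union_eq
      (by
        rw [Set.disjoint_left]
        rintro _ ⟨s, -, rfl⟩ ⟨s', -, hs'⟩
        exact hfh s s' hs'.symm)
      (Set.finite_univ.image f) (Set.finite_univ.image h),
    ncard_img f hf, ncard_img h hh]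

lemma gadV_inj {g : ι} {x y : IVert n} (h : gadV g x = gadV g y) : x = y := by
  simpa [gadV] using h
lemma aIV_inj {t t' : Fin n} (h : aIV n t = aIV n t') : t = t' := by
  simpa [aIV] using h
lemma dIV_inj {t t' : Fin n} (h : dIV n t = dIV n t') : t = t' := by
  simpa [dIV] using h
lemma aIV_ne_dIV {t t' : Fin n} : aIV n t ≠ dIV n t' := by simp [aIV, dIV]

/-! ### The key block lemma -/

theorem block_lemma {ι : Type} (hn : 1 ≤ n) (φ : BVert n ι → VHmcc k n G)
    (hinj : Function.Injective φ)
    (hadj : ∀ x y, (Hmcc k n G).Adj (φ x) (φ y) ↔ x ≠ y ∧ (rB n ι x y ∨ rB n ι y x))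
    (hback : ∀ x, (∀ (g : ι) (t : Fin n), x ≠ gadV g (aIV n t)) →
      ∀ u, (Hmcc k n G).Adj (φ x) u → ∃ y, u = φ y)
    (hone : 2 ≤ n ∨ ∀ g g' : ι, g = g')
    (S : Set (VHmcc k n G)) (hS : IsDom (Hmcc k n G) S)
    (hM : MembLE (Hmcc k n G) S (n + 1)) :
    ∃! g : ι, ∀ t : Fin n, φ (gadV g (aIV n t)) ∈ S := by
  classical
  -- membership upper bound transferred to the block
  have memb : ∀ (v : BVert n ι) (T : Set (BVert n ι)),
      (∀ x ∈ T, φ x ∈ S ∧ (x = v ∨ (x ≠ v ∧ (rB n ι v x ∨ rB n ι x v)))) →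
      T.ncard ≤ n + 1 := by
    intro v T hT
    have hsub : φ '' T ⊆ (insert (φ v) ((Hmcc k n G).neighborSet (φ v))) ∩ S := by
      rintro _ ⟨x, hx, rfl⟩
      obtain ⟨hxS, h⟩ := hT x hx
      refine ⟨?_, hxS⟩
      rcases h with rfl | ⟨hne, hr⟩
      · exact Set.mem_insert _ _
      · exact Set.mem_insert_of_mem _ ((hadj v x).mpr ⟨fun h' => hne h'.symm, hr⟩)
    calc T.ncard = (φ '' T).ncard := (Set.ncard_image_of_injective T hinj).symm
      _ ≤ _ := Set.ncard_le_ncard hsub (Set.toFinite _)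
      _ ≤ n + 1 := hM (φ v)
  -- domination transferred to the block (for non-`a` vertices)
  have dom : ∀ x : BVert n ι, (∀ (g : ι) (t : Fin n), x ≠ gadV g (aIV n t)) →
      φ x ∈ S ∨ ∃ y, (rB n ι x y ∨ rB n ι y x) ∧ φ y ∈ S := by
    intro x hx
    rcases hS (φ x) with h | ⟨u, huS, hadj'⟩
    · exact Or.inl h
    · obtain ⟨y, rfl⟩ := hback x hx u hadj'
      exact Or.inr ⟨y, ((hadj x y).mp hadj').2, huS⟩
  -- C1: every c_p belongs to S
  have hmul : ∀ p : Fin (n + 1), (p.val + 1) * (n + 2) = p.val * (n + 2) + (n + 2) := by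
    intro p; ring
  have hmul2 : ∀ p : Fin (n + 1), (p.val + 1) * (n + 2) ≤ (n + 1) * (n + 2) :=
    fun p => Nat.mul_le_mul_right _ p.isLt
  have hc : ∀ p : Fin (n + 1), φ (cV n ι p) ∈ S := by
    intro p
    by_contra hcp
    have key : ∀ q : Fin ((n + 1) * (n + 2)), p.val * (n + 2) ≤ q.val →
        q.val < (p.val + 1) * (n + 2) → φ (bV n ι q) ∈ S := by
      intro q hq1 hq2
      rcases dom (bV n ι q) (by intro g t; simp [bV, gadV]) with h | ⟨y, hy, hyS⟩
      · exact h
      · obtain ⟨p', rfl, hq1', hq2'⟩ := rB_b_nbr hy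
        have e1 : q.val / (n + 2) = p'.val := Nat.div_eq_of_lt_le hq1' hq2'
        have e2 : q.val / (n + 2) = p.val := Nat.div_eq_of_lt_le hq1 hq2
        have : p' = p := Fin.ext (by omega)
        subst this
        exact absurd hyS hcp
    have hcard := memb (cV n ι p)
      ((fun s : Fin (n + 2) => bV n ι ⟨p.val * (n + 2) + s.val, by
        have h1 := hmul p; have h2 := hmul2 p; have h3 := s.isLt; omega⟩) '' Set.univ)
      (by
        rintro _ ⟨s, -, rfl⟩
        have hlt : p.val * (n + 2) + s.val < (p.val + 1) * (n + 2) := by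
          have h1 := hmul p; have h3 := s.isLt; omega
        refine ⟨key _ (Nat.le_add_right _ _) hlt, Or.inr ⟨by simp [bV, cV], Or.inl ?_⟩⟩
        exact rB_c_b p _ (Nat.le_add_right _ _) hlt)
    rw [ncard_img _ (by intro s s' h; simp [bV] at h; exact Fin.ext (by omega))] at hcard
    omega
  -- C2: f and f' are not in S
  have hff' : φ (fV n ι) ∉ S ∧ φ (f'V n ι) ∉ S := by
    constructor
    · intro hfS
      have hcard := memb (f'V n ι)
        (insert (fV n ι) ((fun p : Fin (n + 1) => cV n ι p) '' Set.univ))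
        (by
          rintro x (rfl | ⟨p, -, rfl⟩)
          · exact ⟨hfS, Or.inr ⟨by simp [fV, f'V], Or.inr rB_f_f'⟩⟩
          · exact ⟨hc p, Or.inr ⟨by simp [cV, f'V], Or.inl (rB_f'_c p)⟩⟩)
      rw [ncard_ins1 _ _ (fun p p' h => by simpa [cV] using h)
        (fun p => by simp [fV, cV])] at hcard
      omega
    · intro hfS
      have hcard := memb (f'V n ι)
        (insert (f'V n ι) ((fun p : Fin (n + 1) => cV n ι p) '' Set.univ))
        (by
          rintro x (rfl | ⟨p, -, rfl⟩)
          · exact ⟨hfS, Or.inl rfl⟩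
          · exact ⟨hc p, Or.inr ⟨by simp [cV, f'V], Or.inl (rB_f'_c p)⟩⟩)
      rw [ncard_ins1 _ _ (fun p p' h => by simpa [cV] using h)
        (fun p => by simp [f'V, cV])] at hcard
      omega
  -- C3: for each gadget and t, a_t ∈ S or h1 ∈ S
  have hC3 : ∀ (g : ι) (t : Fin n),
      φ (gadV g (aIV n t)) ∈ S ∨ φ (gadV g (h1V n)) ∈ S := by
    intro g t
    by_contra hcon
    push_neg at hcon
    obtain ⟨ha, hh1⟩ := hcon
    have hpad : ∀ s : Fin (n + 2), φ (gadV g (padV n t 1 s)) ∈ S := by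
      intro s
      rcases dom (gadV g (padV n t 1 s))
        (by intro g' t'; simp [gadV, padV, aIV]) with h | ⟨y, hy, hyS⟩
      · exact h
      · obtain ⟨z, rfl, hz⟩ := rB_pad_nbr hy
        rcases hz with ⟨hw, hz⟩ | ⟨hw, hz⟩ | ⟨hw, hz⟩ <;> first
          | exact absurd hw (by decide)
          | (rcases hz with rfl | rfl
             · exact absurd hyS ha
             · exact absurd hyS hh1)
    have hcard := memb (gadV g (aIV n t))
      ((fun s : Fin (n + 2) => gadV g (padV n t 1 s)) '' Set.univ)
      (by
        rintro _ ⟨s, -, rfl⟩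
        exact ⟨hpad s, Or.inr ⟨by simp [gadV, aIV, padV],
          Or.inr (rB_gad (rI_pad1 t s _ (Or.inl rfl)))⟩⟩)
    rw [ncard_img _ (fun s s' h => by simpa [gadV, padV] using h)] at hcard
    omega
  -- C4: for each gadget and t, d_t ∈ S or h2 ∈ S
  have hC4 : ∀ (g : ι) (t : Fin n),
      φ (gadV g (dIV n t)) ∈ S ∨ φ (gadV g (h2V n)) ∈ S := by
    intro g t
    by_contra hcon
    push_neg at hcon
    obtain ⟨hd, hh2⟩ := hcon
    have hpad : ∀ s : Fin (n + 2), φ (gadV g (padV n t 2 s)) ∈ S := by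
      intro s
      rcases dom (gadV g (padV n t 2 s))
        (by intro g' t'; simp [gadV, padV, aIV]) with h | ⟨y, hy, hyS⟩
      · exact h
      · obtain ⟨z, rfl, hz⟩ := rB_pad_nbr hy
        rcases hz with ⟨hw, hz⟩ | ⟨hw, hz⟩ | ⟨hw, hz⟩ <;> first
          | exact absurd hw (by decide)
          | (rcases hz with rfl | rfl
             · exact absurd hyS hd
             · exact absurd hyS hh2)
    have hcard := memb (gadV g (dIV n t))
      ((fun s : Fin (n + 2) => gadV g (padV n t 2 s)) '' Set.univ)
      (by
        rintro _ ⟨s, -, rfl⟩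
        exact ⟨hpad s, Or.inr ⟨by simp [gadV, dIV, padV],
          Or.inr (rB_gad (rI_pad2 t s _ (Or.inl rfl)))⟩⟩)
    rw [ncard_img _ (fun s s' h => by simpa [gadV, padV] using h)] at hcard
    omega
  -- C5: for each gadget and t, a_t ∈ S or d_t ∈ S
  have hC5 : ∀ (g : ι) (t : Fin n),
      φ (gadV g (aIV n t)) ∈ S ∨ φ (gadV g (dIV n t)) ∈ S := by
    intro g t
    by_contra hcon
    push_neg at hcon
    obtain ⟨ha, hd⟩ := hcon
    have hpad : ∀ s : Fin (n + 2), φ (gadV g (padV n t 0 s)) ∈ S := by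
      intro s
      rcases dom (gadV g (padV n t 0 s))
        (by intro g' t'; simp [gadV, padV, aIV]) with h | ⟨y, hy, hyS⟩
      · exact h
      · obtain ⟨z, rfl, hz⟩ := rB_pad_nbr hy
        rcases hz with ⟨hw, hz⟩ | ⟨hw, hz⟩ | ⟨hw, hz⟩ <;> first
          | exact absurd hw (by decide)
          | (rcases hz with rfl | rfl
             · exact absurd hyS ha
             · exact absurd hyS hd)
    have hcard := memb (gadV g (aIV n t))
      ((fun s : Fin (n + 2) => gadV g (padV n t 0 s)) '' Set.univ)
      (by
        rintro _ ⟨s, -, rfl⟩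
        exact ⟨hpad s, Or.inr ⟨by simp [gadV, aIV, padV],
          Or.inr (rB_gad (rI_pad0 t s _ (Or.inl rfl)))⟩⟩)
    rw [ncard_img _ (fun s s' h => by simpa [gadV, padV] using h)] at hcard
    omega
  -- C6a: if h1 ∈ S then h2 ∉ S
  have hC6a : ∀ g : ι, φ (gadV g (h1V n)) ∈ S → φ (gadV g (h2V n)) ∉ S := by
    intro g hh1 hh2
    set c : Fin n → BVert n ι := fun t =>
      if φ (gadV g (aIV n t)) ∈ S then gadV g (aIV n t) else gadV g (dIV n t) with hc'
    have hcopt : ∀ t, (c t = gadV g (aIV n t) ∧ φ (gadV g (aIV n t)) ∈ S) ∨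
        (c t = gadV g (dIV n t) ∧ φ (gadV g (dIV n t)) ∈ S) := by
      intro t
      by_cases h : φ (gadV g (aIV n t)) ∈ S
      · exact Or.inl ⟨by rw [hc']; simp [h], h⟩
      · refine Or.inr ⟨by rw [hc']; simp [h], (hC5 g t).resolve_left h⟩
    have hcS : ∀ t, φ (c t) ∈ S := by
      intro t
      rcases hcopt t with ⟨he, hs⟩ | ⟨he, hs⟩ <;> rw [he] <;> exact hs
    have hcadj : ∀ t, rB n ι (gadV g (h1V n)) (c t) ∨ rB n ι (c t) (gadV g (h1V n)) := by
      intro t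
      rcases hcopt t with ⟨he, -⟩ | ⟨he, -⟩ <;> rw [he]
      · exact Or.inr (rB_gad (rI_a_h1 t))
      · exact Or.inl (rB_gad (rI_h1_d t))
    have hcinj : Function.Injective c := by
      intro t t' h
      rcases hcopt t with ⟨h1, -⟩ | ⟨h1, -⟩ <;> rcases hcopt t' with ⟨h2, -⟩ | ⟨h2, -⟩ <;>
        rw [h1, h2] at h
      · exact aIV_inj (gadV_inj h)
      · exact absurd (gadV_inj h) aIV_ne_dIV
      · exact absurd (gadV_inj h).symm aIV_ne_dIV
      · exact dIV_inj (gadV_inj h)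
    have hcard := memb (gadV g (h1V n))
      (insert (gadV g (h1V n)) (insert (gadV g (h2V n)) (c '' Set.univ)))
      (by
        rintro x (rfl | rfl | ⟨t, -, rfl⟩)
        · exact ⟨hh1, Or.inl rfl⟩
        · exact ⟨hh2, Or.inr ⟨by simp [gadV, h1V, h2V], Or.inl (rB_gad rI_h1_h2)⟩⟩
        · refine ⟨hcS t, Or.inr ⟨?_, hcadj t⟩⟩
          rcases hcopt t with ⟨he, -⟩ | ⟨he, -⟩ <;> rw [he] <;>
            simp [gadV, aIV, dIV, h1V])
    rw [ncard_ins2 _ _ _ hcinj (by simp [gadV, h1V, h2V])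
      (by
        intro t
        rcases hcopt t with ⟨he, -⟩ | ⟨he, -⟩ <;> rw [he] <;> simp [gadV, aIV, dIV, h1V])
      (by
        intro t
        rcases hcopt t with ⟨he, -⟩ | ⟨he, -⟩ <;> rw [he] <;>
          simp [gadV, aIV, dIV, h2V])] at hcard
    omega
  -- C6b: if h1 ∈ S then no a_t ∈ S
  have hC6b : ∀ g : ι, φ (gadV g (h1V n)) ∈ S → ∀ t, φ (gadV g (aIV n t)) ∉ S := by
    intro g hh1 t0 ha0
    have hh2 := hC6a g hh1
    have hd : ∀ t, φ (gadV g (dIV n t)) ∈ S := by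
      intro t
      rcases hC4 g t with h | h
      · exact h
      · exact absurd h hh2
    have hcard := memb (gadV g (h1V n))
      (insert (gadV g (h1V n)) (insert (gadV g (aIV n t0))
        ((fun t => gadV g (dIV n t)) '' Set.univ)))
      (by
        rintro x (rfl | rfl | ⟨t, -, rfl⟩)
        · exact ⟨hh1, Or.inl rfl⟩
        · exact ⟨ha0, Or.inr ⟨by simp [gadV, h1V, aIV],
            Or.inr (rB_gad (rI_a_h1 t0))⟩⟩
        · exact ⟨hd t, Or.inr ⟨by simp [gadV, h1V, dIV],
            Or.inl (rB_gad (rI_h1_d t))⟩⟩)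
    rw [ncard_ins2 _ _ _ (fun t t' h => by simpa [gadV, dIV] using h)
      (by simp [gadV, h1V, aIV]) (fun t => by simp [gadV, h1V, dIV])
      (fun t => by simp [gadV, aIV, dIV])] at hcard
    omega
  -- dichotomy: in each gadget either all a's in S or none
  have hdich : ∀ g : ι,
      (∀ t, φ (gadV g (aIV n t)) ∈ S) ∨ (∀ t, φ (gadV g (aIV n t)) ∉ S) := by
    intro g
    by_cases h : ∀ t, φ (gadV g (aIV n t)) ∈ S
    · exact Or.inl h
    · push_neg at h
      obtain ⟨t0, ht0⟩ := h
      have hh1 : φ (gadV g (h1V n)) ∈ S := (hC3 g t0).resolve_left ht0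
      exact Or.inr (hC6b g hh1)
  -- Existence
  have hex : ∃ g : ι, ∀ t, φ (gadV g (aIV n t)) ∈ S := by
    rcases dom (fV n ι) (by intro g t; simp [fV, gadV]) with h | ⟨y, hy, hyS⟩
    · exact absurd h hff'.1
    · rcases rB_f_nbr hy with rfl | ⟨g, t, rfl⟩
      · exact absurd hyS hff'.2
      · refine ⟨g, ?_⟩
        rcases hdich g with h | h
        · exact h
        · exact absurd hyS (h t)
  -- Uniqueness
  obtain ⟨g0, hg0⟩ := hex
  refine ⟨g0, hg0, ?_⟩
  intro g1 hg1
  by_contra hne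
  rcases hone with htwo | hsub
  · have hcard := memb (fV n ι)
      ((fun t => gadV g1 (aIV n t)) '' Set.univ ∪
        (fun t => gadV g0 (aIV n t)) '' Set.univ)
      (by
        rintro x (⟨t, -, rfl⟩ | ⟨t, -, rfl⟩)
        · exact ⟨hg1 t, Or.inr ⟨by simp [gadV, fV], Or.inl (rB_f_a g1 t)⟩⟩
        · exact ⟨hg0 t, Or.inr ⟨by simp [gadV, fV], Or.inl (rB_f_a g0 t)⟩⟩)
    rw [ncard_union2 _ _ (fun t t' h => by simpa [gadV, aIV] using h)
      (fun t t' h => by simpa [gadV, aIV] using h)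
      (fun t t' => by simp [gadV, aIV]; intro h; exact absurd h hne)] at hcard
    omega
  · exact hne (hsub g1 g0)
end
end MCCRed
open MCCRed in
/-- For every dominating set `S` of `H` with `M(v,S) ≤ n+1` for every vertex,
and every block `B` of `H` (vertex-block or edge-block), there is exactly one
type-I gadget in `B` whose set `A = {a_1,…,a_n}` is contained in `S`. -/
theorem stmt_17 (k n : ℕ) (hk : 2 ≤ k) (hn : 1 ≤ n)
    (G : SimpleGraph (Fin k × Fin n)) (S : Set (VHmcc k n G))
    (hS : IsDom (Hmcc k n G) S) (hM : MembLE (Hmcc k n G) S (n + 1)) :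
    (∀ i : Fin k, ∃! ℓ : Fin n, ∀ t : Fin n, vbV G i (gadV ℓ (aIV n t)) ∈ S) ∧
    (∀ P : Pairs k, ∃! e : EdgeIn G P,
      ∀ t : Fin n, ebV G P (gadV e (aIV n t)) ∈ S) := by
  constructor
  · intro i
    refine block_lemma hn (vbV G i) (fun x y h => by simpa [vbV] using h)
      (fun x y => adj_vb_iff i x y) (fun x hx u hu => back_vb i x hx u hu)
      ?_ S hS hM
    rcases Nat.lt_or_ge n 2 with h2 | h2
    · exact Or.inr (fun g g' => Fin.ext (by have := g.isLt; have := g'.isLt; omega))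
    · exact Or.inl h2
  · intro P
    refine block_lemma hn (ebV G P) (fun x y h => ?_)
      (fun x y => adj_eb_iff P x y) (fun x hx u hu => back_eb P x hx u hu)
      ?_ S hS hM
    · have h' : (⟨P, x⟩ : Σ P : Pairs k, BVert n (EdgeIn G P)) = ⟨P, y⟩ := by
        injection h with h; injection h with h
      obtain ⟨-, h2⟩ := Sigma.mk.inj_iff.mp h'
      exact eq_of_heq h2
    rcases Nat.lt_or_ge n 2 with h2 | h2
    · refine Or.inr (fun g g' => Subtype.ext ?_)
      have ha := g.1.1.isLt; have hb := g.1.2.isLt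
      have hc := g'.1.1.isLt; have hd := g'.1.2.isLt
      ext <;> omega
    · exact Or.inl h2
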